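/- arXiv:2404.17566 — 6 statements merged into one kernel-verified Lean document; each statement's English description precedes it below -/
import Mathlib

section
/- Let l be a prime number and n a nonnegative integer such that l^n divides q − 1. Let β ∈ F^* and let μ ∈ Ω satisfy μ^{l^n} = β. Let s be the least nonnegative integer such that μ^{l^s} ∈ F. Then s ≤ n and the degree [F(μ) : F] equals l^s; in particular F(μ) is the (unique) subfield of Ω with q^{l^s} elements. -/
/-!
Put `ζ = μ ^ q / μ`. As `μ ^ l ^ n ∈ F`, the relation `(μ ^ j) ^ q = ζ ^ j * μ ^ j` shows that
`μ ^ j ∈ F` exactly when `orderOf ζ ∣ j`; in particular `orderOf ζ ∣ l ^ n ∣ q - 1`, so `ζ ∈ F`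
and the Frobenius acts on `μ` by `μ ^ q ^ k = ζ ^ k * μ`. Since `[F(μ) : F]` is the order of the
Frobenius on `F(μ)`, it equals `orderOf ζ = l ^ t` for some `t ≤ n`, and minimality of `s`
forces `s = t`.
-/

open IntermediateField

theorem pow_pow_eq_pow_mul_of_pow_eq_mul {M : Type*} [CommMonoid M] {x ζ : M} {q : ℕ}
    (hx : x ^ q = ζ * x) (hζ : ζ ^ q = ζ) (k : ℕ) : x ^ q ^ k = ζ ^ k * x := by
  induction k with
  | zero => simp
  | succ k ih =>
    rw [pow_succ, pow_mul, ih, mul_pow, ← pow_mul, mul_comm k, pow_mul, hζ, hx, pow_succ,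
      mul_assoc]

namespace FiniteField

variable {K L : Type*} [Field K] [Fintype K] [Field L] [Algebra K L]

theorem pow_card_pow_eq_self_iff_finrank_adjoin_dvd {x : L} (hx : IsIntegral K x) (m : ℕ) :
    x ^ Fintype.card K ^ m = x ↔ Module.finrank K K⟮x⟯ ∣ m := by
  have : FiniteDimensional K K⟮x⟯ := adjoin.finiteDimensional hx
  have : Finite K⟮x⟯ := Module.finite_of_finite K
  rw [← orderOf_frobeniusAlgHom, orderOf_dvd_iff_pow_eq_one]
  constructor
  · intro h
    refine adjoin_algHom_ext K fun y (hy : y = x) => ?_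
    subst hy
    simpa [AlgHom.coe_pow, coe_frobeniusAlgHom, pow_iterate, Subtype.ext_iff] using h
  · intro h
    simpa [AlgHom.coe_pow, coe_frobeniusAlgHom, pow_iterate, Subtype.ext_iff] using
      congr($h (AdjoinSimple.gen K x))

theorem mem_range_algebraMap_iff_pow_card_eq_self {x : L} (hx : IsIntegral K x) :
    x ∈ (algebraMap K L).range ↔ x ^ Fintype.card K = x := by
  rw [← pow_one (Fintype.card K), pow_card_pow_eq_self_iff_finrank_adjoin_dvd hx,
    Nat.dvd_one, finrank_adjoin_simple_eq_one_iff, mem_bot, RingHom.mem_range, Set.mem_range]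

theorem pow_mem_range_algebraMap_iff_orderOf_dvd {μ ζ : L} (hμ : IsIntegral K μ) (hμ0 : μ ≠ 0)
    (hμζ : μ ^ Fintype.card K = ζ * μ) (j : ℕ) :
    μ ^ j ∈ (algebraMap K L).range ↔ orderOf ζ ∣ j := by
  rw [mem_range_algebraMap_iff_pow_card_eq_self (hμ.pow j), ← pow_mul, mul_comm, pow_mul, hμζ,
    mul_pow, mul_eq_right₀ (pow_ne_zero j hμ0), orderOf_dvd_iff_pow_eq_one]

theorem finrank_adjoin_eq_orderOf {μ ζ : L} (hμ : IsIntegral K μ) (hμ0 : μ ≠ 0)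
    (hμζ : μ ^ Fintype.card K = ζ * μ) (hζ : ζ ^ Fintype.card K = ζ) :
    Module.finrank K K⟮μ⟯ = orderOf ζ := by
  have key (m : ℕ) : Module.finrank K K⟮μ⟯ ∣ m ↔ orderOf ζ ∣ m := by
    rw [← pow_card_pow_eq_self_iff_finrank_adjoin_dvd hμ, pow_pow_eq_pow_mul_of_pow_eq_mul hμζ hζ,
      mul_eq_right₀ hμ0, orderOf_dvd_iff_pow_eq_one]
  exact Nat.dvd_antisymm ((key _).2 dvd_rfl) ((key _).1 dvd_rfl)

end FiniteField

open FiniteField in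
theorem stmt0_general (q : ℕ) (F Ω : Type*) [Field F] [Fintype F] (hq : Fintype.card F = q)
    [Field Ω] [Algebra F Ω]
    (l : ℕ) (hl : l.Prime) (n : ℕ) (hdvd : l ^ n ∣ q - 1)
    (β : F) (hβ : β ≠ 0) (μ : Ω) (hμ : μ ^ l ^ n = algebraMap F Ω β)
    (s : ℕ) (hs : IsLeast {k : ℕ | μ ^ l ^ k ∈ (algebraMap F Ω).range} s) :
    s ≤ n ∧ Module.finrank F F⟮μ⟯ = l ^ s ∧ Nat.card F⟮μ⟯ = q ^ l ^ s := by
  subst hq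
  have hμ0 : μ ≠ 0 := by
    rintro rfl
    exact hβ (by simpa [hl.ne_zero] using hμ.symm)
  have hμint : IsIntegral F μ := .of_pow (pow_pos hl.pos n) (hμ ▸ isIntegral_algebraMap)
  set ζ := μ ^ Fintype.card F / μ
  have hμζ : μ ^ Fintype.card F = ζ * μ := (div_mul_cancel₀ _ hμ0).symm
  have hmem := pow_mem_range_algebraMap_iff_orderOf_dvd hμint hμ0 hμζ
  have hord : orderOf ζ ∣ l ^ n := (hmem _).1 ⟨β, hμ.symm⟩
  have hζ : ζ ^ Fintype.card F = ζ := by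
    rw [← pow_sub_one_mul Fintype.card_ne_zero, orderOf_dvd_iff_pow_eq_one.1 (hord.trans hdvd),
      one_mul]
  obtain ⟨t, htn, ht⟩ := (Nat.dvd_prime_pow hl).1 hord
  have hst : s = t := by
    have hset : {k : ℕ | μ ^ l ^ k ∈ (algebraMap F Ω).range} = Set.Ici t := by
      ext k
      rw [Set.mem_ofPred_eq, hmem, ht, Nat.pow_dvd_pow_iff_le_right hl.one_lt, Set.mem_Ici]
    exact hs.unique (hset ▸ isLeast_Ici)
  subst hst
  have : FiniteDimensional F F⟮μ⟯ := adjoin.finiteDimensional hμint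
  have hfinrank : Module.finrank F F⟮μ⟯ = l ^ s := by
    rw [finrank_adjoin_eq_orderOf hμint hμ0 hμζ hζ, ht]
  refine ⟨htn, hfinrank, ?_⟩
  rw [Module.natCard_eq_pow_finrank (K := F), hfinrank, Nat.card_eq_fintype_card]

/-- Let `F` be a finite field with `q` elements, `Ω` an algebraic closure of `F`.
Let `l` be a prime and `n ≥ 0` with `l ^ n ∣ q - 1`. Let `β ∈ F^*` and `μ ∈ Ω` with
`μ ^ (l ^ n) = β`. Let `s` be the least nonnegative integer with `μ ^ (l ^ s) ∈ F`.
Then `s ≤ n`, `[F(μ) : F] = l ^ s`, and `F(μ)` has `q ^ (l ^ s)` elements. -/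
theorem stmt0 (q : ℕ) (F Ω : Type*) [Field F] [Fintype F] (hq : Fintype.card F = q)
    [Field Ω] [Algebra F Ω] [IsAlgClosure F Ω]
    (l : ℕ) (hl : l.Prime) (n : ℕ) (hdvd : l ^ n ∣ q - 1)
    (β : F) (hβ : β ≠ 0) (μ : Ω) (hμ : μ ^ l ^ n = algebraMap F Ω β)
    (s : ℕ) (hs : IsLeast {k : ℕ | μ ^ l ^ k ∈ (algebraMap F Ω).range} s) :
    s ≤ n ∧ Module.finrank F F⟮μ⟯ = l ^ s ∧ Nat.card F⟮μ⟯ = q ^ l ^ s :=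
  stmt0_general q F Ω hq l hl n hdvd β hβ μ hμ s hs
end

section
/- Let l be a prime number and let n, m be nonnegative integers such that l^{n+m} divides q − 1. Let β ∈ F^*, let μ ∈ Ω satisfy μ^{l^n} = β and μ ∉ F, and let s be the least nonnegative integer such that μ^{l^s} ∈ F (so s ≥ 1). Then for every δ ∈ Ω with δ^{l^{n+m}} = β one has [F(δ) : F] = l^{s+m}. -/
/-!
The degree of `F⟮x⟯` over `F` is the order of the Frobenius on it, so it divides `d` exactly when
`x ^ q ^ d = x`, i.e. when `orderOf x ∣ q ^ d - 1`. Write `q - 1 = l ^ v * u₀` with `l ∤ u₀`. The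
minimality of `s` forces `orderOf μ = l ^ (v + s) * u` with `u ∣ q - 1`, so `l ^ (n + 1)` divides
`orderOf μ` and `l` divides the order of `β`; taking `l ^ m`-th roots then multiplies the order by
`l ^ m`, giving `orderOf δ = l ^ (v + s + m) * u`. By lifting the exponent,
`l ^ (v + c) ∣ q ^ d - 1 ↔ l ^ c ∣ d`, hence `[F⟮δ⟯ : F] = l ^ (s + m)`; the exceptional case
`l = 2`, `q ≡ 3 [MOD 4]` of lifting the exponent only allows `s + m ≤ 1`, which holds because
`s + m ≤ n + m` and `l ^ (n + m) ∣ q - 1`.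
-/

open IntermediateField

section OrderOf

theorem pow_eq_self_iff_orderOf_dvd {M₀ : Type*} [MonoidWithZero M₀] [IsRightCancelMulZero M₀]
    {x : M₀} (hx : x ≠ 0) {N : ℕ} (hN : N ≠ 0) : x ^ N = x ↔ orderOf x ∣ N - 1 := by
  obtain ⟨N, rfl⟩ := Nat.exists_eq_succ_of_ne_zero hN
  rw [orderOf_dvd_iff_pow_eq_one, pow_succ, Nat.succ_sub_one, mul_eq_right₀ hx]

variable {G : Type*} [Monoid G] {p : ℕ}

theorem orderOf_eq_prime_pow_mul_orderOf_pow (hp : p.Prime) {x : G} (a : ℕ)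
    (h : p ∣ orderOf (x ^ p ^ a)) : orderOf x = p ^ a * orderOf (x ^ p ^ a) := by
  induction a with
  | zero => simp
  | succ a ih =>
    rw [pow_succ, pow_mul] at h ⊢
    have hdvd : p ∣ orderOf (x ^ p ^ a) := by
      by_contra hp'
      rw [Nat.Coprime.orderOf_pow (Nat.coprime_comm.mp (hp.coprime_iff_not_dvd.mpr hp'))] at h
      exact hp' h
    rw [ih hdvd, orderOf_pow_of_dvd hp.ne_zero hdvd, mul_assoc, Nat.mul_div_cancel' hdvd]

theorem orderOf_eq_prime_pow_mul_of_pow_eq_pow (hp : p.Prime) {x y : G} {a b : ℕ}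
    (hxy : x ^ p ^ (a + b) = y ^ p ^ a) (hy : p ^ (a + 1) ∣ orderOf y) :
    orderOf x = p ^ b * orderOf y := by
  have hpz : p ∣ orderOf (y ^ p ^ a) := by
    have hyz : orderOf y ∣ p ^ a * orderOf (y ^ p ^ a) :=
      orderOf_dvd_of_pow_eq_one (by rw [pow_mul, pow_orderOf_eq_one])
    rw [pow_succ] at hy
    exact Nat.dvd_of_mul_dvd_mul_left (pow_pos hp.pos a) (hy.trans hyz)
  rw [orderOf_eq_prime_pow_mul_orderOf_pow hp (a + b) (hxy ▸ hpz), hxy,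
    orderOf_eq_prime_pow_mul_orderOf_pow hp a hpz, pow_add]
  ring

end OrderOf

theorem Nat.eq_prime_pow_mul_of_dvd_of_not_dvd {p k e u : ℕ} (hp : p.Prime)
    (h : e ∣ p ^ (k + 1) * u) (h' : ¬ e ∣ p ^ k * u) : ∃ u', u' ∣ u ∧ e = p ^ (k + 1) * u' := by
  obtain ⟨a, u', ha, hu', rfl⟩ := exists_dvd_and_dvd_of_dvd_mul h
  obtain ⟨j, hj, rfl⟩ := (Nat.dvd_prime_pow hp).mp ha
  refine ⟨u', hu', ?_⟩
  obtain rfl | hjk := eq_or_lt_of_le hj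
  · rfl
  · exact absurd (mul_dvd_mul (pow_dvd_pow p (by omega)) hu') h'

section LiftingTheExponent

theorem padicValNat_pow_sub_one {l q d : ℕ} (hl : l.Prime) (hq : 1 < q) (hlq : l ∣ q - 1)
    (h2 : l ≠ 2 ∨ 4 ∣ q - 1) (hd : d ≠ 0) :
    padicValNat l (q ^ d - 1) = padicValNat l (q - 1) + padicValNat l d := by
  have : Fact l.Prime := ⟨hl⟩
  have hlq' : ¬ l ∣ q := fun h => hl.one_lt.ne' <| Nat.dvd_one.mp <| by
    simpa [Nat.sub_sub_self hq.le] using Nat.dvd_sub h hlq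
  rcases hl.eq_two_or_odd' with rfl | hodd
  · have h4 : (4 : ℤ) ∣ (q : ℤ) - 1 := by
      rw [← Nat.cast_one, ← Nat.cast_sub hq.le]
      exact_mod_cast h2.resolve_left (by decide)
    have hlte := Int.two_pow_sub_pow' d h4 (by exact_mod_cast hlq')
    rw [one_pow] at hlte
    have hqd : q ^ d - 1 ≠ 0 := by
      have := Nat.one_lt_pow hd hq
      omega
    rw [← Nat.cast_inj (R := ℕ∞), Nat.cast_add, padicValNat_eq_emultiplicity hqd,
      padicValNat_eq_emultiplicity (by omega), padicValNat_eq_emultiplicity hd,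
      ← Int.natCast_emultiplicity, ← Int.natCast_emultiplicity, ← Int.natCast_emultiplicity]
    push_cast [Nat.cast_sub hq.le, Nat.cast_sub (Nat.one_le_pow _ _ (by omega : 0 < q))]
    exact hlte
  · simpa using padicValNat.pow_sub_pow hodd hq (by simpa using hlq) hlq' hd

theorem four_dvd_pow_sub_one_iff {q : ℕ} (hq : q % 4 = 3) (d : ℕ) : 4 ∣ q ^ d - 1 ↔ 2 ∣ d := by
  have hq' : (q : ZMod 4) = -1 := by
    rw [← ZMod.natCast_mod, hq]
    decide
  rw [← ZMod.natCast_eq_zero_iff, Nat.cast_sub (Nat.one_le_pow _ _ (by omega)), sub_eq_zero,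
    Nat.cast_pow, Nat.cast_one, hq', neg_one_pow_eq_one_iff_even (by decide), even_iff_two_dvd]

/-- For `l = 2` and `q ≡ 3 [MOD 4]` the equivalence fails once `c ≥ 2` (take `q = 3`, `d = 2`). -/
theorem pow_padicValNat_add_dvd_pow_sub_one_iff {l q c d : ℕ} (hl : l.Prime) (hq : 1 < q)
    (hlq : l ∣ q - 1) (h2 : l = 2 → c ≤ 1 ∨ 4 ∣ q - 1) :
    l ^ (padicValNat l (q - 1) + c) ∣ q ^ d - 1 ↔ l ^ c ∣ d := by
  have : Fact l.Prime := ⟨hl⟩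
  rcases eq_or_ne d 0 with rfl | hd
  · simp
  have hqd : q ^ d - 1 ≠ 0 := by
    have := Nat.one_lt_pow hd hq
    omega
  by_cases hLTE : l ≠ 2 ∨ 4 ∣ q - 1
  · rw [padicValNat_dvd_iff_le hqd, padicValNat_pow_sub_one hl hq hlq hLTE hd,
      add_le_add_iff_left, padicValNat_dvd_iff_le hd]
  obtain ⟨rfl, h4⟩ : l = 2 ∧ ¬ 4 ∣ q - 1 := by simpa using hLTE
  have hv : padicValNat 2 (q - 1) = 1 := by
    have hdvd2 : 2 ^ 1 ∣ q - 1 := by simpa using hlq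
    have hndvd4 : ¬ 2 ^ 2 ∣ q - 1 := h4
    rw [padicValNat_dvd_iff_le (by omega)] at hdvd2 hndvd4
    omega
  have hc : c ≤ 1 := (h2 rfl).resolve_right h4
  rw [hv]
  interval_cases c
  · simpa using hlq.trans (Nat.sub_one_dvd_pow_sub_one q d)
  · exact four_dvd_pow_sub_one_iff (by omega) d

end LiftingTheExponent

section FiniteField

variable {F Ω : Type*} [Field F] [Fintype F] [Field Ω] [Algebra F Ω]

theorem pow_card_pow_eq_self_iff_finrank_dvd {x : Ω} (hx : IsIntegral F x) (d : ℕ) :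
    x ^ Fintype.card F ^ d = x ↔ Module.finrank F F⟮x⟯ ∣ d := by
  have : FiniteDimensional F F⟮x⟯ := adjoin.finiteDimensional hx
  have : Finite F⟮x⟯ := Module.finite_of_finite F
  rw [← FiniteField.orderOf_frobeniusAlgHom, orderOf_dvd_iff_pow_eq_one]
  constructor
  · intro h
    refine adjoin_algHom_ext F fun y hy => ?_
    obtain rfl : y = x := hy
    ext
    simp [AlgHom.coe_pow, FiniteField.coe_frobeniusAlgHom, pow_iterate, h]
  · intro h
    simpa [AlgHom.coe_pow, FiniteField.coe_frobeniusAlgHom, pow_iterate] using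
      congrArg (fun φ => ((φ (AdjoinSimple.gen F x) : F⟮x⟯) : Ω)) h

theorem mem_range_algebraMap_iff_pow_card {x : Ω} (hx : IsIntegral F x) :
    x ∈ (algebraMap F Ω).range ↔ x ^ Fintype.card F = x := by
  simpa [finrank_adjoin_simple_eq_one_iff, mem_bot] using
    (pow_card_pow_eq_self_iff_finrank_dvd hx 1).symm

theorem finrank_adjoin_eq_prime_pow_of_orderOf_eq {x : Ω} (hx : IsIntegral F x) (hx0 : x ≠ 0)
    {l c u : ℕ} (hl : l.Prime) (hlq : l ∣ Fintype.card F - 1)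
    (h2 : l = 2 → c ≤ 1 ∨ 4 ∣ Fintype.card F - 1) (hu : u ∣ Fintype.card F - 1) (hlu : ¬ l ∣ u)
    (hord : orderOf x = l ^ (padicValNat l (Fintype.card F - 1) + c) * u) :
    Module.finrank F F⟮x⟯ = l ^ c := by
  have hq : 1 < Fintype.card F := Fintype.one_lt_card
  have hcop : (l ^ (padicValNat l (Fintype.card F - 1) + c)).Coprime u :=
    Nat.Coprime.pow_left _ (hl.coprime_iff_not_dvd.mpr hlu)
  refine Nat.dvd_right_iff_eq.mp fun d => ?_
  rw [← pow_card_pow_eq_self_iff_finrank_dvd hx,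
    pow_eq_self_iff_orderOf_dvd hx0 (pow_ne_zero _ (by omega)), hord,
    ← pow_padicValNat_add_dvd_pow_sub_one_iff hl hq hlq h2]
  exact ⟨(dvd_mul_right _ _).trans, fun h => hcop.mul_dvd_of_dvd_of_dvd h
    (hu.trans (Nat.sub_one_dvd_pow_sub_one _ d))⟩

theorem exists_orderOf_eq_of_isLeast_pow_mem_range [Algebra.IsAlgebraic F Ω] {l : ℕ}
    (hl : l.Prime) {μ : Ω} (hμ0 : μ ≠ 0) {s : ℕ}
    (hs : IsLeast {k : ℕ | μ ^ l ^ k ∈ (algebraMap F Ω).range} (s + 1)) :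
    ∃ u, u ∣ Fintype.card F - 1 ∧ ¬ l ∣ u ∧
      orderOf μ = l ^ (padicValNat l (Fintype.card F - 1) + (s + 1)) * u := by
  have : Fact l.Prime := ⟨hl⟩
  have hq : 1 < Fintype.card F := Fintype.one_lt_card
  obtain ⟨v, u₀, hlu₀, hQ⟩ :=
    Nat.exists_eq_pow_mul_and_not_dvd (by omega : Fintype.card F - 1 ≠ 0) l hl.ne_one
  have hv : padicValNat l (Fintype.card F - 1) = v := by
    rw [hQ, padicValNat.mul (pow_ne_zero _ hl.ne_zero) (by rintro rfl; simp at hlu₀),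
      padicValNat.prime_pow, padicValNat.eq_zero_of_not_dvd hlu₀, add_zero]
  have hmem : ∀ k, μ ^ l ^ k ∈ (algebraMap F Ω).range ↔ orderOf μ ∣ l ^ (v + k) * u₀ := by
    intro k
    rw [mem_range_algebraMap_iff_pow_card (Algebra.IsIntegral.isIntegral _),
      pow_eq_self_iff_orderOf_dvd (pow_ne_zero _ hμ0) (by omega), orderOf_dvd_iff_pow_eq_one,
      orderOf_dvd_iff_pow_eq_one, ← pow_mul, hQ, ← mul_assoc, ← pow_add, add_comm k]
  obtain ⟨u, hu, he⟩ := Nat.eq_prime_pow_mul_of_dvd_of_not_dvd (k := v + s) hl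
    ((hmem (s + 1)).mp hs.1) fun h => by simpa using hs.2 ((hmem s).mpr h)
  exact ⟨u, hu.trans (hQ ▸ dvd_mul_left _ _), fun h => hlu₀ (h.trans hu), hv ▸ he⟩

end FiniteField

/-- Let `F` be a finite field with `q` elements, `Ω` an algebraic closure of `F`.
Let `l` be prime and `n, m ≥ 0` with `l ^ (n + m) ∣ q - 1`. Let `β ∈ F^*`, `μ ∈ Ω`
with `μ ^ (l ^ n) = β` and `μ ∉ F`, and let `s` be the least nonnegative integer with
`μ ^ (l ^ s) ∈ F` (so `s ≥ 1`). Then for every `δ ∈ Ω` with `δ ^ (l ^ (n + m)) = β`,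
`[F(δ) : F] = l ^ (s + m)`. -/
theorem stmt2 (q : ℕ) (F Ω : Type*) [Field F] [Fintype F] (hq : Fintype.card F = q)
    [Field Ω] [Algebra F Ω] [IsAlgClosure F Ω]
    (l : ℕ) (hl : l.Prime) (n m : ℕ) (hdvd : l ^ (n + m) ∣ q - 1)
    (β : F) (hβ : β ≠ 0) (μ : Ω) (hμ : μ ^ l ^ n = algebraMap F Ω β)
    (hμF : μ ∉ (algebraMap F Ω).range)
    (s : ℕ) (hs : IsLeast {k : ℕ | μ ^ l ^ k ∈ (algebraMap F Ω).range} s) :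
    ∀ δ : Ω, δ ^ l ^ (n + m) = algebraMap F Ω β →
      Module.finrank F F⟮δ⟯ = l ^ (s + m) := by
  intro δ hδ
  subst hq
  have : Fact l.Prime := ⟨hl⟩
  have hq : 1 < Fintype.card F := Fintype.one_lt_card
  obtain ⟨s, rfl⟩ : ∃ s', s = s' + 1 :=
    Nat.exists_eq_succ_of_ne_zero fun h => hμF (by simpa [h] using hs.1)
  have hsn : s + 1 ≤ n := hs.2 ⟨β, hμ.symm⟩
  have hnv : n ≤ padicValNat l (Fintype.card F - 1) :=
    (padicValNat_dvd_iff_le (by omega)).mp ((pow_dvd_pow l (by omega)).trans hdvd)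
  have hβ' : algebraMap F Ω β ≠ 0 := (map_ne_zero _).mpr hβ
  have hl0 : ∀ k, l ^ k ≠ 0 := fun k => pow_ne_zero k hl.ne_zero
  obtain ⟨u, hu, hlu, hord⟩ :=
    exists_orderOf_eq_of_isLeast_pow_mem_range hl (ne_zero_pow (hl0 n) (hμ ▸ hβ')) hs
  have hδord : orderOf δ = l ^ (padicValNat l (Fintype.card F - 1) + (s + 1 + m)) * u := by
    rw [orderOf_eq_prime_pow_mul_of_pow_eq_pow hl (hδ.trans hμ.symm)
      (hord ▸ (pow_dvd_pow l (by omega)).trans (dvd_mul_right _ _)), hord]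
    ring
  refine finrank_adjoin_eq_prime_pow_of_orderOf_eq (Algebra.IsIntegral.isIntegral δ)
    (ne_zero_pow (hl0 _) (hδ ▸ hβ')) hl ((dvd_pow_self l (by omega)).trans hdvd)
    (fun hl2 => ?_) hu hlu hδord
  subst hl2
  exact (le_or_gt (s + 1 + m) 1).imp id fun h =>
    (pow_dvd_pow 2 (show 2 ≤ n + m by omega)).trans hdvd
end

section
/- Let l be a prime number and n ≥ 1 an integer such that l^n divides q − 1. Let β ∈ F^* and let μ ∈ Ω satisfy μ^{l^n} = β. Then for every integer s with 1 ≤ s ≤ n, the degree [F(μ) : F] equals l^s if and only if β ∈ (F^*)^{l^{n−s}} and β ∉ (F^*)^{l^{n−s+1}}. -/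
/-!
Let `t ≤ n` be maximal with `β ∈ (F^*)^{l^t}`, say `β = y ^ l ^ t`. Then `μ ^ l ^ (n - t) / y`
is an `l ^ t`-th root of unity, hence lies in `F` since `l ^ n ∣ q - 1`. So
`μ ^ l ^ (n - t) = c` with `c ∈ F`, `c ^ l ^ t = β`, and by maximality of `t`, `c` is not an
`l`-th power when `t < n`. Then `X ^ l ^ (n - t) - c` is irreducible (Capelli; for `l = 2` the
possible obstruction `-4 b ^ 4` is excluded because `4 ∣ q - 1` makes `-1` a square), so
`[F(μ) : F] = l ^ (n - t)`, which equals `l ^ s` exactly when `t = n - s`.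
-/

open IntermediateField
open Polynomial

section Kummer

variable {K : Type*} [Field K]

lemma norm_adjoinSimple_gen_of_minpoly_eq_X_pow_sub_C {E : Type*} [Field E] [Algebra K E]
    {x : E} {m : ℕ} (hm : m ≠ 0) {a : K} (hx : minpoly K x = X ^ m - C a) :
    Algebra.norm K (AdjoinSimple.gen K x) = (-1) ^ (m + 1) * a := by
  have hint : IsIntegral K x := not_not.mp fun h ↦ by
    simpa only [degree_zero, degree_X_pow_sub_C (Nat.pos_of_ne_zero hm),
      WithBot.natCast_ne_bot] using congr_arg degree (hx.symm.trans (dif_neg h))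
  rw [← adjoin.powerBasis_gen hint, Algebra.PowerBasis.norm_gen_eq_coeff_zero_minpoly]
  simp [minpoly_gen, hx, Ne.symm hm, adjoin.powerBasis_dim, pow_succ]

/-- Capelli's criterion for `X ^ p ^ n - a`, in the form needed when `p = 2`: the extra condition
on `-a` rules out the reducible `X ^ 4 + 4 b ^ 4`. -/
theorem X_pow_sub_C_irreducible_of_prime_pow_of_neg {p : ℕ} (hp : p.Prime) {n : ℕ} {a : K}
    (ha : ∀ b : K, b ^ p ≠ a) (ha' : 2 ≤ n → ∀ b : K, b ^ p ≠ -a) :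
    Irreducible (X ^ p ^ n - C a) := by
  induction n with
  | zero => simpa using irreducible_X_sub_C a
  | succ n ih =>
    rw [pow_succ']
    refine X_pow_mul_sub_C_irreducible (ih fun h ↦ ha' (by omega)) fun E _ _ x hx ↦ ?_
    refine X_pow_sub_C_irreducible_of_prime hp fun b hb ↦ ?_
    have hnorm : Algebra.norm K b ^ p = (-1) ^ (p ^ n + 1) * a := by
      rw [← map_pow, hb,
        norm_adjoinSimple_gen_of_minpoly_eq_X_pow_sub_C (pow_pos hp.pos n).ne' hx]
    rcases Nat.even_or_odd (p ^ n + 1) with he | ho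
    · exact ha _ (by rw [hnorm, he.neg_one_pow, one_mul])
    · have hn : n ≠ 0 := by
        rintro rfl
        simp [Nat.odd_iff] at ho
      exact ha' (by omega) _ (by rw [hnorm, ho.neg_one_pow, neg_one_mul])

variable {L : Type*} [Field L] [Algebra K L] {x : L} {m : ℕ} {a : K}

lemma isIntegral_of_pow_eq_algebraMap (hm : m ≠ 0) (hx : x ^ m = algebraMap K L a) :
    IsIntegral K x :=
  ⟨X ^ m - C a, monic_X_pow_sub_C a hm, by simp [hx]⟩

lemma finrank_adjoin_simple_le_of_pow_eq_algebraMap (hm : m ≠ 0)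
    (hx : x ^ m = algebraMap K L a) : Module.finrank K K⟮x⟯ ≤ m := by
  rw [adjoin.finrank (isIntegral_of_pow_eq_algebraMap hm hx),
    ← natDegree_X_pow_sub_C (n := m) (r := a)]
  exact natDegree_le_natDegree (minpoly.min K x (monic_X_pow_sub_C a hm) (by simp [hx]))

lemma finrank_adjoin_simple_eq_of_pow_eq_algebraMap (H : Irreducible (X ^ m - C a))
    (hx : x ^ m = algebraMap K L a) : Module.finrank K K⟮x⟯ = m := by
  have hm := ne_zero_of_irreducible_X_pow_sub_C H
  rw [adjoin.finrank (isIntegral_of_pow_eq_algebraMap hm hx),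
    ← minpoly.eq_of_irreducible_of_monic H (by simp [hx]) (monic_X_pow_sub_C a hm),
    natDegree_X_pow_sub_C]

end Kummer

namespace FiniteField

variable {F : Type*} [Field F] [Fintype F]

lemma exists_pow_eq_neg_one {l : ℕ} (hl : l.Prime) (h : l ^ 2 ∣ Fintype.card F - 1) :
    ∃ r : F, r ^ l = -1 := by
  rcases hl.eq_two_or_odd' with rfl | hodd
  · have h1 : 0 < Fintype.card F := Fintype.card_pos
    obtain ⟨r, hr⟩ := (isSquare_neg_one_iff (F := F)).mpr (by omega)
    exact ⟨r, by rw [sq, hr]⟩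
  · exact ⟨-1, hodd.neg_one_pow⟩

theorem X_pow_sub_C_irreducible_of_prime_pow {l m : ℕ} (hl : l.Prime)
    (hdvd : l ^ m ∣ Fintype.card F - 1) {a : F} (ha : ∀ b : F, b ^ l ≠ a) :
    Irreducible (X ^ l ^ m - C a) := by
  refine X_pow_sub_C_irreducible_of_prime_pow_of_neg hl ha fun hm b hb ↦ ?_
  obtain ⟨r, hr⟩ := exists_pow_eq_neg_one hl ((pow_dvd_pow l hm).trans hdvd)
  exact ha (r * b) (by rw [mul_pow, hr, hb, neg_one_mul, neg_neg])

variable {K : Type*} [Field K] [Algebra F K]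

lemma mem_range_algebraMap_of_pow_card_eq {z : K} (hz : z ^ Fintype.card F = z) :
    z ∈ (algebraMap F K).range := by
  have hne := X_pow_card_sub_X_ne_zero F (Fintype.one_lt_card (α := F))
  have hsplit : (X ^ Fintype.card F - X : F[X]).Splits := by
    rw [splits_iff_card_roots, roots_X_pow_card_sub_X,
      X_pow_card_sub_X_natDegree_eq F (Fintype.one_lt_card (α := F))]
    rfl
  exact hsplit.mem_range_of_isRoot hne (by simp [hz])

lemma exists_algebraMap_eq_of_pow_eq_one {z : K} {k : ℕ} (hk : k ∣ Fintype.card F - 1)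
    (hz : z ^ k = 1) : ∃ u : Fˣ, algebraMap F K u = z := by
  have hq := Fintype.one_lt_card (α := F)
  have hz0 : z ≠ 0 := by
    rintro rfl
    rw [zero_pow_eq_one₀] at hz
    subst hz
    have := Nat.eq_zero_of_zero_dvd hk
    omega
  have hzq : z ^ Fintype.card F = z := by
    obtain ⟨j, hj⟩ := hk
    rw [← Nat.sub_add_cancel hq.le, pow_succ, hj, pow_mul, hz, one_pow, one_mul]
  obtain ⟨u, hu⟩ := mem_range_algebraMap_of_pow_card_eq hzq
  exact ⟨Units.mk0 u (by rintro rfl; exact hz0 (by rw [← hu, map_zero])), hu⟩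

variable {l n t : ℕ} {β : Fˣ} {x : K}

lemma exists_pow_eq_algebraMap_of_pow_eq (ht : t ≤ n) (hdvd : l ^ n ∣ Fintype.card F - 1)
    (hβ : ∃ y : Fˣ, y ^ l ^ t = β) (hx : x ^ l ^ n = algebraMap F K β) :
    ∃ c : Fˣ, c ^ l ^ t = β ∧ x ^ l ^ (n - t) = algebraMap F K c := by
  obtain ⟨y, rfl⟩ := hβ
  have hpow : (x ^ l ^ (n - t)) ^ l ^ t = x ^ l ^ n := by
    rw [← pow_mul, ← pow_add, Nat.sub_add_cancel ht]
  obtain ⟨ζ, hζ⟩ := exists_algebraMap_eq_of_pow_eq_one ((pow_dvd_pow l ht).trans hdvd)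
    (z := x ^ l ^ (n - t) / algebraMap F K y)
    (by rw [div_pow, hpow, hx, Units.val_pow_eq_pow_val, map_pow, div_self (by simp)])
  have hc : x ^ l ^ (n - t) = algebraMap F K ↑(ζ * y) := by
    rw [Units.val_mul, map_mul, hζ, div_mul_cancel₀ _ (by simp)]
  refine ⟨ζ * y, Units.val_injective ((algebraMap F K).injective ?_), hc⟩
  rw [Units.val_pow_eq_pow_val, map_pow, ← hc, hpow, hx]

lemma finrank_adjoin_le_of_pow_eq (hl : l ≠ 0) (ht : t ≤ n)
    (hdvd : l ^ n ∣ Fintype.card F - 1) (hβ : ∃ y : Fˣ, y ^ l ^ t = β)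
    (hx : x ^ l ^ n = algebraMap F K β) : Module.finrank F F⟮x⟯ ≤ l ^ (n - t) := by
  obtain ⟨c, -, hc⟩ := exists_pow_eq_algebraMap_of_pow_eq ht hdvd hβ hx
  exact finrank_adjoin_simple_le_of_pow_eq_algebraMap (pow_ne_zero _ hl) hc

lemma finrank_adjoin_eq_of_pow_eq (hl : l.Prime) (ht : t ≤ n)
    (hdvd : l ^ n ∣ Fintype.card F - 1) (hβ : ∃ y : Fˣ, y ^ l ^ t = β)
    (hβ' : ¬ ∃ y : Fˣ, y ^ l ^ (t + 1) = β) (hx : x ^ l ^ n = algebraMap F K β) :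
    Module.finrank F F⟮x⟯ = l ^ (n - t) := by
  obtain ⟨c, hcβ, hc⟩ := exists_pow_eq_algebraMap_of_pow_eq ht hdvd hβ hx
  have hcl : ∀ b : F, b ^ l ≠ c := by
    rintro b hb
    have hb0 : b ≠ 0 := by
      rintro rfl
      exact c.ne_zero (by rw [← hb, zero_pow hl.ne_zero])
    refine hβ' ⟨Units.mk0 b hb0, ?_⟩
    rw [← hcβ, pow_succ', pow_mul]
    congr 1
    exact Units.val_injective (by simp [hb])
  exact finrank_adjoin_simple_eq_of_pow_eq_algebraMap
    (X_pow_sub_C_irreducible_of_prime_pow hl ((pow_dvd_pow l (n.sub_le t)).trans hdvd) hcl) hc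

end FiniteField

theorem stmt3_general (q : ℕ) (F Ω : Type*) [Field F] [Fintype F] (hq : Fintype.card F = q)
    [Field Ω] [Algebra F Ω]
    (l : ℕ) (hl : l.Prime) (n : ℕ) (hdvd : l ^ n ∣ q - 1)
    (β : Fˣ) (μ : Ω) (hμ : μ ^ l ^ n = algebraMap F Ω (β : F)) :
    ∀ s : ℕ, 1 ≤ s → s ≤ n →
      (Module.finrank F F⟮μ⟯ = l ^ s ↔
        ((∃ y : Fˣ, y ^ l ^ (n - s) = β) ∧ ¬ ∃ y : Fˣ, y ^ l ^ (n - s + 1) = β)) := by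
  subst hq
  intro s hs hsn
  classical
  refine ⟨fun hdeg ↦ ?_, fun ⟨hβ, hβ'⟩ ↦ ?_⟩
  · set P : ℕ → Prop := fun j ↦ ∃ y : Fˣ, y ^ l ^ j = β
    set t := Nat.findGreatest P n
    have hβt : P t := Nat.findGreatest_spec (Nat.zero_le n) ⟨β, by simp⟩
    have htn : t < n := by
      refine (Nat.findGreatest_le n).lt_of_ne fun htn ↦ ?_
      have hle := FiniteField.finrank_adjoin_le_of_pow_eq hl.ne_zero le_rfl hdvd (htn ▸ hβt) hμ
      rw [Nat.sub_self, pow_zero, hdeg] at hle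
      exact (Nat.one_lt_pow (by omega) hl.one_lt).not_ge hle
    have hβt' := Nat.findGreatest_is_greatest (Nat.lt_succ_self t) htn
    obtain rfl : s = n - t := Nat.pow_right_injective hl.two_le
      (hdeg.symm.trans (FiniteField.finrank_adjoin_eq_of_pow_eq hl htn.le hdvd hβt hβt' hμ))
    rw [Nat.sub_sub_self htn.le]
    exact ⟨hβt, hβt'⟩
  · simpa only [Nat.sub_sub_self hsn] using
      FiniteField.finrank_adjoin_eq_of_pow_eq hl (n.sub_le s) hdvd hβ hβ' hμ

/-- Let `F` be a finite field with `q` elements, `Ω` an algebraic closure of `F`.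
Let `l` be a prime and `n ≥ 1` with `l ^ n ∣ q - 1`. Let `β ∈ F^*` and `μ ∈ Ω` with
`μ ^ (l ^ n) = β`. Then for every integer `s` with `1 ≤ s ≤ n`, `[F(μ) : F] = l ^ s`
iff `β` is an `l ^ (n - s)`-th power in `F^*` but not an `l ^ (n - s + 1)`-th power. -/
theorem stmt3 (q : ℕ) (F Ω : Type*) [Field F] [Fintype F] (hq : Fintype.card F = q)
    [Field Ω] [Algebra F Ω] [IsAlgClosure F Ω]
    (l : ℕ) (hl : l.Prime) (n : ℕ) (hn : 1 ≤ n) (hdvd : l ^ n ∣ q - 1)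
    (β : Fˣ) (μ : Ω) (hμ : μ ^ l ^ n = algebraMap F Ω (β : F)) :
    ∀ s : ℕ, 1 ≤ s → s ≤ n →
      (Module.finrank F F⟮μ⟯ = l ^ s ↔
        ((∃ y : Fˣ, y ^ l ^ (n - s) = β) ∧ ¬ ∃ y : Fˣ, y ^ l ^ (n - s + 1) = β)) :=
  stmt3_general q F Ω hq l hl n hdvd β μ hμ
end

section
/- Let l be a prime number and κ ≥ 1 an integer such that l^κ divides q − 1, and let D ∈ F[T] be a nonzero polynomial. Assume it is not the case that (l = 2, deg D is odd, and 2^{κ+1} does not divide q − 1). Then for any elements α and α′ of an algebraic closure of F(T) satisfying α^{l^κ} = D and (α′)^{l^κ} = (−1)^{deg D}·D, the subfields F(T)(α) and F(T)(α′) of that algebraic closure are equal. -/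
/-!
Since `l ^ κ ∣ q - 1`, the field `F` contains a primitive `l ^ κ`-th root of unity, so two
`l ^ κ`-th roots of radicands that differ by an `l ^ κ`-th power `c ^ (l ^ κ)` with `c ∈ Fˣ`
differ by a factor in `Fˣ` and generate the same field. It remains to write `(-1) ^ deg D` as
such a power: `c = 1` if `deg D` is even, `c = -1` if `l` is odd, and `c` a primitive
`2 ^ (κ + 1)`-th root of unity if `l = 2` and `2 ^ (κ + 1) ∣ q - 1`.
-/

open IntermediateField

theorem FiniteField.exists_isPrimitiveRoot_of_dvd_card_sub_one {F : Type*} [Field F]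
    [Fintype F] {n : ℕ} (hn : n ≠ 0) (hdvd : n ∣ Fintype.card F - 1) :
    ∃ ζ : F, IsPrimitiveRoot ζ n := by
  classical
  rw [← Fintype.card_units] at hdvd
  obtain ⟨u, hu⟩ : (Finset.univ.filter fun u : Fˣ ↦ orderOf u = n).Nonempty := by
    rw [← Finset.card_pos, IsCyclic.card_orderOf_eq_totient hdvd]
    exact Nat.totient_pos.2 (Nat.pos_of_ne_zero hn)
  have hu : IsPrimitiveRoot u n := (Finset.mem_filter.1 hu).2 ▸ IsPrimitiveRoot.orderOf u
  exact ⟨u, IsPrimitiveRoot.coe_units_iff.2 hu⟩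

theorem IsPrimitiveRoot.pow_eq_neg_one_of_two_mul {R : Type*} [CommRing R] [IsDomain R]
    {ζ : R} {n : ℕ} (hζ : IsPrimitiveRoot ζ (2 * n)) (hn : n ≠ 0) : ζ ^ n = -1 := by
  have h := hζ.pow_of_dvd hn (dvd_mul_left n 2)
  rw [Nat.mul_div_cancel _ (Nat.pos_of_ne_zero hn)] at h
  exact h.eq_neg_one_of_two_right

theorem IsPrimitiveRoot.exists_eq_pow_mul_of_pow_eq_pow {K : Type*} [Field K] {n : ℕ}
    [NeZero n] {ζ : K} (hζ : IsPrimitiveRoot ζ n) {x y : K} (h : x ^ n = y ^ n) :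
    ∃ i : ℕ, x = ζ ^ i * y := by
  rcases eq_or_ne y 0 with rfl | hy
  · rw [zero_pow (NeZero.ne n), pow_eq_zero_iff (NeZero.ne n)] at h
    exact ⟨0, by simp [h]⟩
  · obtain ⟨i, -, hi⟩ :=
      hζ.eq_pow_of_pow_eq_one (ξ := x / y) (by rw [div_pow, h, div_self (pow_ne_zero n hy)])
    exact ⟨i, by rw [hi, div_mul_cancel₀ x hy]⟩

theorem IntermediateField.adjoin_simple_algebraMap_mul {K L : Type*} [Field K] [Field L]
    [Algebra K L] {c : K} (hc : c ≠ 0) (α : L) : K⟮algebraMap K L c * α⟯ = K⟮α⟯ := by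
  apply le_antisymm
  · rw [adjoin_simple_le_iff]
    exact mul_mem (algebraMap_mem _ c) (mem_adjoin_simple_self K α)
  · rw [adjoin_simple_le_iff]
    have hα : algebraMap K L c⁻¹ * (algebraMap K L c * α) = α := by
      rw [map_inv₀, inv_mul_cancel_left₀ ((map_ne_zero _).2 hc)]
    have h :=
      mul_mem (algebraMap_mem K⟮algebraMap K L c * α⟯ c⁻¹) (mem_adjoin_simple_self K _)
    rwa [hα] at h

theorem IntermediateField.adjoin_simple_eq_of_pow_eq_mul_pow {K L : Type*} [Field K] [Field L]
    [Algebra K L] {n : ℕ} [NeZero n] {ζ : K} (hζ : IsPrimitiveRoot ζ n) {α β : L} {c : K}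
    (hc : c ≠ 0) (h : β ^ n = (algebraMap K L c * α) ^ n) : K⟮α⟯ = K⟮β⟯ := by
  obtain ⟨i, hi⟩ :=
    (hζ.map_of_injective (algebraMap K L).injective).exists_eq_pow_mul_of_pow_eq_pow h
  rw [hi, ← mul_assoc, ← map_pow, ← map_mul, adjoin_simple_algebraMap_mul]
  exact mul_ne_zero (pow_ne_zero i (hζ.ne_zero (NeZero.ne n))) hc

theorem FiniteField.exists_pow_prime_pow_eq_neg_one_pow {F : Type*} [Field F] [Fintype F]
    {l κ d : ℕ} (hl : l.Prime)
    (hexc : ¬ (l = 2 ∧ Odd d ∧ ¬ 2 ^ (κ + 1) ∣ Fintype.card F - 1)) :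
    ∃ c : F, c ^ l ^ κ = (-1) ^ d := by
  rcases Nat.even_or_odd d with hd | hd
  · exact ⟨1, by rw [one_pow, hd.neg_one_pow]⟩
  rw [hd.neg_one_pow]
  rcases eq_or_ne l 2 with rfl | hl2
  · have h2 : 2 * 2 ^ κ ∣ Fintype.card F - 1 := by
      rw [← pow_succ']
      by_contra h
      exact hexc ⟨rfl, hd, h⟩
    obtain ⟨η, hη⟩ := exists_isPrimitiveRoot_of_dvd_card_sub_one (by positivity) h2
    exact ⟨η, hη.pow_eq_neg_one_of_two_mul (by positivity)⟩
  · exact ⟨-1, ((hl.odd_of_ne_two hl2).pow).neg_one_pow⟩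

theorem stmt6_general (q : ℕ) (F : Type*) [Field F] [Fintype F] (hq : Fintype.card F = q)
    (Ω : Type*) [Field Ω] [Algebra (RatFunc F) Ω] [IsAlgClosure (RatFunc F) Ω]
    (l κ : ℕ) (hl : l.Prime) (hdvd : l ^ κ ∣ q - 1)
    (D : Polynomial F)
    (hexc : ¬ (l = 2 ∧ Odd D.natDegree ∧ ¬ 2 ^ (κ + 1) ∣ q - 1))
    (α α' : Ω)
    (hα : α ^ l ^ κ =
      algebraMap (RatFunc F) Ω (algebraMap (Polynomial F) (RatFunc F) D))
    (hα' : α' ^ l ^ κ =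
      algebraMap (RatFunc F) Ω
        (algebraMap (Polynomial F) (RatFunc F) ((-1) ^ D.natDegree * D))) :
    IntermediateField.adjoin (RatFunc F) {α} =
      IntermediateField.adjoin (RatFunc F) {α'} := by
  subst hq
  have : NeZero (l ^ κ) := ⟨pow_ne_zero κ hl.ne_zero⟩
  obtain ⟨ζ, hζ⟩ := FiniteField.exists_isPrimitiveRoot_of_dvd_card_sub_one (NeZero.ne _) hdvd
  obtain ⟨c, hc⟩ := FiniteField.exists_pow_prime_pow_eq_neg_one_pow hl hexc
  have hc0 : c ≠ 0 := by
    rintro rfl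
    rw [zero_pow (NeZero.ne _)] at hc
    exact pow_ne_zero _ (neg_ne_zero.2 one_ne_zero) hc.symm
  let ι := algebraMap F (RatFunc F)
  refine adjoin_simple_eq_of_pow_eq_mul_pow (hζ.map_of_injective ι.injective)
    ((map_ne_zero ι).2 hc0) ?_
  rw [hα', mul_pow, hα, ← map_pow, ← map_pow, hc, ← map_mul]
  simp [ι]

/-- Let `F` be a finite field with `q` elements, `l` a prime, `κ ≥ 1` with
`l ^ κ ∣ q - 1`, and `D ∈ F[T]` a nonzero polynomial. Assume it is not the case
that (`l = 2`, `deg D` odd, and `2 ^ (κ + 1) ∤ q - 1`). Then for any `α, α'` in an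
algebraic closure of `F(T)` with `α ^ (l ^ κ) = D` and `α' ^ (l ^ κ) = (-1) ^ (deg D) * D`,
the fields `F(T)(α)` and `F(T)(α')` are equal. -/
theorem stmt6 (q : ℕ) (F : Type*) [Field F] [Fintype F] (hq : Fintype.card F = q)
    (Ω : Type*) [Field Ω] [Algebra (RatFunc F) Ω] [IsAlgClosure (RatFunc F) Ω]
    (l κ : ℕ) (hl : l.Prime) (hκ : 1 ≤ κ) (hdvd : l ^ κ ∣ q - 1)
    (D : Polynomial F) (hD : D ≠ 0)
    (hexc : ¬ (l = 2 ∧ Odd D.natDegree ∧ ¬ 2 ^ (κ + 1) ∣ q - 1))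
    (α α' : Ω)
    (hα : α ^ l ^ κ =
      algebraMap (RatFunc F) Ω (algebraMap (Polynomial F) (RatFunc F) D))
    (hα' : α' ^ l ^ κ =
      algebraMap (RatFunc F) Ω
        (algebraMap (Polynomial F) (RatFunc F) ((-1) ^ D.natDegree * D))) :
    IntermediateField.adjoin (RatFunc F) {α} =
      IntermediateField.adjoin (RatFunc F) {α'} :=
  stmt6_general q F hq Ω l κ hl hdvd D hexc α α' hα hα'
end

section
/- Let l be a prime number and let n, r be positive integers. For 1 ≤ j ≤ r let a_j and d_j be nonnegative integers with a_j ≤ n − 1 and a_1 ≤ a_2 ≤ ⋯ ≤ a_r, and let b_j and c_j be positive integers not divisible by l. Set N := Σ_{j=1}^r b_j·c_j·l^{a_j + d_j}, let t := n − min{n, v_l(N)}, and let m := max_{1 ≤ j ≤ r} (n − a_j − min{n − a_j, d_j}). Suppose i is an index, 1 ≤ i ≤ r, such that n − a_i − min{n − a_i, d_i} = m and n − a_j − d_j < m for all j > i. If m > t, then i ≥ 2 and there exists an index j < i with n − a_j − d_j = n − a_i − d_i = m. -/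
/-!
If `l ^ (n - m + 1)` divides `N = ∑ b j * c j * l ^ (a j + d j)`, the smallest exponent
`a j + d j` cannot be attained by a single term, since that term alone would have valuation
exactly equal to it. The index `i` attains `a i + d i = n - m`, which is minimal by the choice
of `m`, so a second index `j` attains it as well, and `j < i` because every later index has
`n - a j - d j < m`.
-/

theorem exists_ne_exponent_le_of_pow_succ_dvd_sum {ι : Type*} {s : Finset ι} {p : ℕ}
    (hp : p ≠ 0) {u e : ι → ℕ} {i : ι} (hi : i ∈ s) (hu : ¬ p ∣ u i)
    (hdvd : p ^ (e i + 1) ∣ ∑ j ∈ s, u j * p ^ e j) :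
    ∃ j ∈ s, j ≠ i ∧ e j ≤ e i := by
  classical
  by_contra! hlt
  have hrest : p ^ (e i + 1) ∣ ∑ j ∈ s.erase i, u j * p ^ e j :=
    Finset.dvd_sum fun j hj =>
      (pow_dvd_pow p (hlt j (Finset.mem_of_mem_erase hj) (Finset.ne_of_mem_erase hj))).mul_left _
  rw [← Finset.add_sum_erase s _ hi, add_comm (u i * _), Nat.dvd_add_right hrest, pow_succ,
    mul_comm (u i)] at hdvd
  exact hu (Nat.dvd_of_mul_dvd_mul_left (pow_pos (Nat.pos_of_ne_zero hp) _) hdvd)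

theorem stmt8_general (l : ℕ) (hl : l.Prime) (n r : ℕ)
    (a b c d : Fin r → ℕ)
    (hbl : ∀ j, ¬ l ∣ b j)
    (hcl : ∀ j, ¬ l ∣ c j)
    (N : ℕ) (hN : N = ∑ j, b j * c j * l ^ (a j + d j))
    (t : ℕ) (ht : t = n - min n (padicValNat l N))
    (m : ℕ) (hm : m = Finset.univ.sup (fun j => n - a j - min (n - a j) (d j)))
    (i : Fin r) (hi : n - a i - min (n - a i) (d i) = m)
    (hij : ∀ j, i < j → n - a j - d j < m)
    (hmt : m > t) :
    1 ≤ (i : ℕ) ∧ ∃ j, j < i ∧ n - a j - d j = m ∧ n - a i - d i = m := by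
  -- In `ℕ`, `x - min x y = x - y`: the truncation in `m` and `hi` is vacuous.
  simp only [tsub_min] at hi hm
  have hle_m : ∀ j, n - a j - d j ≤ m := fun j =>
    hm ▸ Finset.le_sup (f := fun j => n - a j - d j) (Finset.mem_univ j)
  have hval : n - m + 1 ≤ padicValNat l N := by have := hle_m i; omega
  have hdvd : l ^ (a i + d i + 1) ∣ ∑ j, b j * c j * l ^ (a j + d j) := by
    rw [← hN]
    exact (pow_dvd_pow l (by omega)).trans ((pow_dvd_pow l hval).trans pow_padicValNat_dvd)
  have hbc : ¬ l ∣ b i * c i := fun h => (hl.dvd_mul.mp h).elim (hbl i) (hcl i)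
  obtain ⟨j, -, hji, hj⟩ := exists_ne_exponent_le_of_pow_succ_dvd_sum
    (e := fun j => a j + d j) hl.ne_zero (Finset.mem_univ i) hbc hdvd
  have hj_m : n - a j - d j = m := by have := hle_m j; omega
  have hj_lt : j < i := (lt_or_gt_of_ne hji).resolve_right fun h => (hij j h).ne hj_m
  exact ⟨by have : (j : ℕ) < i := hj_lt; omega, j, hj_lt, hj_m, hi⟩

/-- Let `l` be a prime and `n, r ≥ 1`. For `j = 1, …, r` let `a j, d j ≥ 0` with
`a j ≤ n - 1` and `a` monotone, and let `b j, c j` be positive integers not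
divisible by `l`. Set `N := ∑ j, b j * c j * l ^ (a j + d j)`,
`t := n - min n (v_l N)`, and `m := max_j (n - a j - min (n - a j) (d j))`.
Suppose `i` is an index with `n - a i - min (n - a i) (d i) = m` and
`n - a j - d j < m` for all `j > i`. If `m > t` then `i ≥ 2` (i.e. there is an
index before `i`) and there exists `j < i` with `n - a j - d j = n - a i - d i = m`. -/
theorem stmt8 (l : ℕ) (hl : l.Prime) (n r : ℕ) (hn : 0 < n) (hr : 0 < r)
    (a b c d : Fin r → ℕ)
    (ha : ∀ j, a j ≤ n - 1) (hmono : Monotone a)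
    (hb : ∀ j, 0 < b j) (hbl : ∀ j, ¬ l ∣ b j)
    (hc : ∀ j, 0 < c j) (hcl : ∀ j, ¬ l ∣ c j)
    (N : ℕ) (hN : N = ∑ j, b j * c j * l ^ (a j + d j))
    (t : ℕ) (ht : t = n - min n (padicValNat l N))
    (m : ℕ) (hm : m = Finset.univ.sup (fun j => n - a j - min (n - a j) (d j)))
    (i : Fin r) (hi : n - a i - min (n - a i) (d i) = m)
    (hij : ∀ j, i < j → n - a j - d j < m)
    (hmt : m > t) :
    1 ≤ (i : ℕ) ∧ ∃ j, j < i ∧ n - a j - d j = m ∧ n - a i - d i = m :=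
  stmt8_general l hl n r a b c d hbl hcl N hN t ht m hm i hi hij hmt
end

section
/- Let F be a finite field with q elements of characteristic p, let l be a prime number different from p, and let λ ≤ N be nonnegative integers such that l^λ divides q − 1. Let θ ∈ F^* be an element that is not an l-th power in F^*. Then the polynomial X^{l^N} − θ·t^{l^λ} is irreducible over the field F((t)) of formal Laurent series over F. -/
/-!
Write `a = θ t^(l^λ)`. Comparing leading coefficients, `a` is not an `l`-th power in `F((t))`,
which settles odd `l` by Capelli's theorem. For `l = 2` Capelli's criterion also asks that
`a ≠ -4b⁴`; we prove this case of it by induction along `K ⊂ K(√a)`: writing an element of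
`K(√a)` as `u + v√a`, if its square is `±√a` then `a = -4(2v)⁻⁴`. In `F((t))`, `a = -4b⁴` forces
`4 ∣ 2^λ ∣ q - 1`, so `-1 = i²` in `F` and `a = (2ib²)²` would be a square.
-/

open Polynomial IntermediateField

universe u

namespace HahnSeries

variable {Γ R : Type*} [AddCommMonoid Γ] [LinearOrder Γ] [IsOrderedCancelAddMonoid Γ]
  [Semiring R] [NoZeroDivisors R]

theorem leadingCoeff_pow (x : HahnSeries Γ R) (n : ℕ) :
    (x ^ n).leadingCoeff = x.leadingCoeff ^ n := by
  induction n with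
  | zero => simp [leadingCoeff_one]
  | succ n ih => rw [pow_succ, leadingCoeff_mul, ih, pow_succ]

theorem pow_ne_single {n : ℕ} {c : R} (hc : ∀ y : R, y ^ n ≠ c) (x : HahnSeries Γ R) (g : Γ) :
    x ^ n ≠ single g c := fun h ↦
  hc x.leadingCoeff (by rw [← leadingCoeff_pow, h, leadingCoeff_of_single])

end HahnSeries

theorem LaurentSeries.algebraMap_mul_X_pow {F : Type*} [Field F] (c : F) (n : ℕ) :
    algebraMap F (LaurentSeries F) c * ((PowerSeries.X : PowerSeries F) : LaurentSeries F) ^ n =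
      HahnSeries.single (n : ℤ) c := by
  rw [LaurentSeries.algebraMap_apply, ← PowerSeries.coe_pow, HahnSeries.ofPowerSeries_X_pow,
    HahnSeries.C_apply, HahnSeries.single_mul_single, zero_add, mul_one]

theorem LaurentSeries.neg_four_mul_pow_four_ne_single {R : Type*} [CommRing R] [IsDomain R]
    {c : R} (hc : ∀ y : R, y ^ 2 ≠ c) {g : ℤ} (hg : 4 ∣ g → IsSquare (-1 : R))
    (x : LaurentSeries R) : -(4 * x ^ 4) ≠ HahnSeries.single g c := by
  intro h
  have hc0 : c ≠ 0 := fun h0 ↦ hc 0 (by simp [h0])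
  have h4 : (4 : LaurentSeries R) = HahnSeries.single 0 4 := by
    rw [← HahnSeries.C_apply, map_ofNat]
  have h4R : (4 : R) ≠ 0 := by
    rintro h0
    rw [h4, h0, map_zero, zero_mul, neg_zero, eq_comm,
      HahnSeries.single_eq_zero_iff] at h
    exact hc0 h
  have hx : x ≠ 0 := by
    rintro rfl
    rw [zero_pow four_ne_zero, mul_zero, neg_zero, eq_comm, HahnSeries.single_eq_zero_iff] at h
    exact hc0 h
  have hord : g = 4 * x.order := by
    have := congrArg HahnSeries.order h
    rw [HahnSeries.order_neg, HahnSeries.order_mul (by simpa [h4]) (pow_ne_zero 4 hx),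
      HahnSeries.order_pow, h4, HahnSeries.order_single h4R, HahnSeries.order_single hc0] at this
    simpa using this.symm
  have hlc : c = -(4 * x.leadingCoeff ^ 4) := by
    have := congrArg HahnSeries.leadingCoeff h
    rwa [HahnSeries.leadingCoeff_neg, HahnSeries.leadingCoeff_mul, HahnSeries.leadingCoeff_pow,
      h4, HahnSeries.leadingCoeff_of_single, HahnSeries.leadingCoeff_of_single, eq_comm] at this
  obtain ⟨i, hi⟩ := hg ⟨x.order, hord⟩
  exact hc (2 * i * x.leadingCoeff ^ 2) (by linear_combination -hlc - 4 * x.leadingCoeff ^ 4 * hi)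

section QuadraticExtension

variable {K L : Type*} [Field K] [Field L] [Algebra K L]

theorem eq_zero_of_algebraMap_add_mul_eq_zero {α : L} (hα : 1 < (minpoly K α).natDegree)
    {r s : K} (h : algebraMap K L r + algebraMap K L s * α = 0) : r = 0 ∧ s = 0 := by
  obtain rfl | hs := eq_or_ne s 0
  · simpa using h
  have hdeg : (C s * X + C r).degree = 1 := degree_linear hs
  have hle := minpoly.degree_le_of_ne_zero K α (p := C s * X + C r)
    (fun h0 ↦ by simp [h0] at hdeg) (by simpa [add_comm] using h)
  rw [hdeg] at hle
  have : (minpoly K α).natDegree ≤ 1 := natDegree_le_of_degree_le hle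
  omega

theorem exists_eq_algebraMap_add_mul_gen {x : L} (hx : (minpoly K x).natDegree = 2)
    (γ : K⟮x⟯) : ∃ u v : K,
      γ = algebraMap K K⟮x⟯ u + algebraMap K K⟮x⟯ v * AdjoinSimple.gen K x := by
  have hint : IsIntegral K x := by
    by_contra h
    rw [minpoly.eq_zero h, natDegree_zero] at hx
    omega
  obtain ⟨f, hf, rfl⟩ := (adjoin.powerBasis hint).exists_eq_aeval γ
  rw [adjoin.powerBasis_dim, hx] at hf
  rw [eq_X_add_C_of_natDegree_le_one (p := f) (by omega)]
  exact ⟨f.coeff 0, f.coeff 1, by simp [adjoin.powerBasis_gen, add_comm]⟩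

theorem eq_neg_four_mul_pow_four_of_sq_eq {α : L} {a u v ε : K}
    (hα : minpoly K α = X ^ 2 - C a) (hε : ε ^ 2 = 1)
    (h : (algebraMap K L u + algebraMap K L v * α) ^ 2 = algebraMap K L ε * α) :
    a = -(4 * (2 * v)⁻¹ ^ 4) := by
  have hα2 : α ^ 2 = algebraMap K L a := by
    simpa [hα, sub_eq_zero] using minpoly.aeval K α
  obtain ⟨hre, him⟩ := eq_zero_of_algebraMap_add_mul_eq_zero (r := u ^ 2 + a * v ^ 2)
    (s := 2 * u * v - ε) (by rw [hα, natDegree_X_pow_sub_C]; norm_num)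
    (by simp only [map_add, map_sub, map_mul, map_pow, map_ofNat]
        linear_combination h - algebraMap K L v ^ 2 * hα2)
  have hv : 2 * v ≠ 0 := by
    rintro h0
    have : ε = 0 := by linear_combination u * h0 - him
    simp [this] at hε
  set w := (2 * v)⁻¹
  have hw : 2 * v * w = 1 := mul_inv_cancel₀ hv
  have hu : u = ε * w := by linear_combination (-u) * hw + w * him
  linear_combination 4 * w ^ 2 * hre - 4 * w ^ 2 * (u + ε * w) * hu - a * (2 * v * w + 1) * hw -
    4 * w ^ 4 * hε

end QuadraticExtension

theorem X_pow_two_pow_sub_C_irreducible {K : Type u} [Field K] {a : K}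
    (hsq : ∀ b : K, b ^ 2 ≠ a) (h4 : ∀ b : K, -(4 * b ^ 4) ≠ a) (n : ℕ) :
    Irreducible (X ^ 2 ^ n - C a) := by
  induction n generalizing K a with
  | zero => simpa using irreducible_X_sub_C a
  | succ n ih =>
    rw [pow_succ 2 n]
    refine X_pow_mul_sub_C_irreducible (X_pow_sub_C_irreducible_of_prime Nat.prime_two hsq)
      fun E _ _ x hx ↦ ?_
    have hgen : minpoly K (AdjoinSimple.gen K x) = X ^ 2 - C a := by rw [minpoly_gen, hx]
    have hdeg : (minpoly K x).natDegree = 2 := by rw [hx, natDegree_X_pow_sub_C]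
    apply ih
    · intro b hb
      obtain ⟨u, v, rfl⟩ := exists_eq_algebraMap_add_mul_gen hdeg b
      exact h4 _ (eq_neg_four_mul_pow_four_of_sq_eq hgen (one_pow 2)
        (by rw [hb, map_one, one_mul])).symm
    · intro b hb
      obtain ⟨u, v, huv⟩ := exists_eq_algebraMap_add_mul_gen hdeg (2 * b ^ 2)
      refine h4 _ (eq_neg_four_mul_pow_four_of_sq_eq hgen (u := u) (v := v) (ε := -1)
        (by norm_num) ?_).symm
      rw [← huv, map_neg, map_one, ← hb]
      ring

theorem stmt9_general (q : ℕ) (F : Type*) [Field F] [Fintype F] (hq : Fintype.card F = q)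
    (l : ℕ) (hl : l.Prime)
    (lam N : ℕ) (hdvd : l ^ lam ∣ q - 1)
    (θ : Fˣ) (hθ : ¬ ∃ y : Fˣ, y ^ l = θ) :
    Irreducible (Polynomial.X ^ l ^ N -
      Polynomial.C (algebraMap F (LaurentSeries F) (θ : F) *
        ((PowerSeries.X : PowerSeries F) : LaurentSeries F) ^ l ^ lam)) := by
  rw [LaurentSeries.algebraMap_mul_X_pow]
  have hθl : ∀ y : F, y ^ l ≠ θ := fun y hy ↦ hθ
    ⟨Units.mk0 y (by rintro rfl; exact θ.ne_zero (by simpa [hl.ne_zero] using hy.symm)),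
      Units.ext hy⟩
  obtain rfl | hl2 := eq_or_ne l 2
  · refine X_pow_two_pow_sub_C_irreducible (HahnSeries.pow_ne_single hθl · _)
      (LaurentSeries.neg_four_mul_pow_four_ne_single hθl fun h4 ↦ ?_) N
    have : 4 ∣ q - 1 := (Int.natCast_dvd_natCast.mp h4).trans hdvd
    rw [FiniteField.isSquare_neg_one_iff, hq]
    omega
  · exact X_pow_sub_C_irreducible_of_prime_pow hl hl2 N (HahnSeries.pow_ne_single hθl · _)

/-- Let `F` be a finite field with `q` elements of characteristic `p`, let `l` be a
prime different from `p`, and let `λ ≤ N` be nonnegative integers with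
`l ^ λ ∣ q - 1`. Let `θ ∈ F^*` not be an `l`-th power in `F^*`. Then the polynomial
`X ^ (l ^ N) - θ * t ^ (l ^ λ)` is irreducible over the Laurent series field `F((t))`. -/
theorem stmt9 (q : ℕ) (F : Type*) [Field F] [Fintype F] (hq : Fintype.card F = q)
    (p : ℕ) [CharP F p] (l : ℕ) (hl : l.Prime) (hlp : l ≠ p)
    (lam N : ℕ) (hlamN : lam ≤ N) (hdvd : l ^ lam ∣ q - 1)
    (θ : Fˣ) (hθ : ¬ ∃ y : Fˣ, y ^ l = θ) :
    Irreducible (Polynomial.X ^ l ^ N -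
      Polynomial.C (algebraMap F (LaurentSeries F) (θ : F) *
        ((PowerSeries.X : PowerSeries F) : LaurentSeries F) ^ l ^ lam)) :=
  stmt9_general q F hq l hl lam N hdvd θ hθ
end
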